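/- arXiv:0907.2811 — 3 statements merged into one kernel-verified Lean document; each statement's English description precedes it below -/
import Mathlib

section
/- If A is a 3×3 normal tropical real matrix, then each column of A^⊙2 is a fixed point of the map x ↦ A ⊙ x on ℝ³, i.e., A ⊙ col(A^⊙2, j) = col(A^⊙2, j) for j = 1,2,3. -/
/-!
Four indices `i, k, l, j` of `Fin 3` cannot be distinct, so a walk of length three in a normal
matrix contains a loop; its weight is `≤ 0`, and dropping it (padding with a zero diagonal entry)
gives a walk of length two at least as heavy. Hence `A ⊙ A^⊙2 ≤ A^⊙2`, while `a_ii = 0` gives the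
reverse inequality.
-/

/-- Tropical (max,+) product of 3×3 real matrices. -/
def tmul (A B : Fin 3 → Fin 3 → ℝ) : Fin 3 → Fin 3 → ℝ :=
  fun i j => max (A i 0 + B 0 j) (max (A i 1 + B 1 j) (A i 2 + B 2 j))

/-- Tropical (max,+) matrix–vector product. -/
def tvec (A : Fin 3 → Fin 3 → ℝ) (x : Fin 3 → ℝ) : Fin 3 → ℝ :=
  fun i => max (A i 0 + x 0) (max (A i 1 + x 1) (A i 2 + x 2))

/-- A 3×3 real matrix is normal if its diagonal is 0 and all entries are ≤ 0. -/
def IsNormal (A : Fin 3 → Fin 3 → ℝ) : Prop :=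
  (∀ i, A i i = 0) ∧ ∀ i j, A i j ≤ 0

/-- The index of `Fin 3` distinct from both `i` and `j` (when `i ≠ j`). -/
def otherIdx (i j : Fin 3) : Fin 3 := ⟨(6 - i.val - j.val) % 3, Nat.mod_lt _ (by norm_num)⟩

/-- The matrix Ă: zero diagonal, and β_{ij} = a_{ik} + a_{kj} for i ≠ j, k the third index. -/
def breve (A : Fin 3 → Fin 3 → ℝ) : Fin 3 → Fin 3 → ℝ :=
  fun i j => if i = j then 0 else A i (otherIdx i j) + A (otherIdx i j) j

section Tropical

variable (A B : Fin 3 → Fin 3 → ℝ) (x : Fin 3 → ℝ) (i j : Fin 3) {c : ℝ}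

lemma le_tmul (m : Fin 3) : A i m + B m j ≤ tmul A B i j := by
  fin_cases m <;> simp [tmul]

lemma tmul_le (h : ∀ m, A i m + B m j ≤ c) : tmul A B i j ≤ c :=
  max_le (h 0) (max_le (h 1) (h 2))

lemma le_tvec (k : Fin 3) : A i k + x k ≤ tvec A x i := by
  fin_cases k <;> simp [tvec]

lemma tvec_le (h : ∀ k, A i k + x k ≤ c) : tvec A x i ≤ c :=
  max_le (h 0) (max_le (h 1) (h 2))

end Tropical

namespace IsNormal

variable {A : Fin 3 → Fin 3 → ℝ}

lemma walk3_le_tmul_self (hA : IsNormal A) (i k l j : Fin 3) :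
    A i k + A k l + A l j ≤ tmul A A i j := by
  obtain ⟨hdiag, hnonpos⟩ := hA
  have hrepeat : i = k ∨ k = l ∨ l = j ∨ i = l ∨ k = j ∨ i = j := by omega
  rcases hrepeat with rfl | rfl | rfl | rfl | rfl | rfl
  · linarith [hdiag i, le_tmul A A i j l]
  · linarith [hdiag k, le_tmul A A i j k]
  · linarith [hdiag l, le_tmul A A i l k]
  · linarith [hdiag i, hnonpos i k, hnonpos k i, le_tmul A A i j i]
  · linarith [hdiag k, hnonpos k l, hnonpos l k, le_tmul A A i k k]
  · linarith [hdiag i, hnonpos i k, hnonpos k l, hnonpos l i, le_tmul A A i i i]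

lemma tvec_tmul_self_le (hA : IsNormal A) (i j : Fin 3) :
    tvec A (fun m => tmul A A m j) i ≤ tmul A A i j :=
  tvec_le _ _ _ fun k => by
    have hk : tmul A A k j ≤ tmul A A i j - A i k :=
      tmul_le _ _ _ _ fun l => by linarith [hA.walk3_le_tmul_self i k l j]
    linarith

lemma le_tvec_self (hA : IsNormal A) (x : Fin 3 → ℝ) (i : Fin 3) : x i ≤ tvec A x i := by
  simpa [hA.1 i] using le_tvec A x i i

end IsNormal

theorem stmt5 (A : Fin 3 → Fin 3 → ℝ) (hA : IsNormal A) (j : Fin 3) :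
    tvec A (fun i => tmul A A i j) = fun i => tmul A A i j := by
  funext i
  exact le_antisymm (hA.tvec_tmul_self_le i j) (hA.le_tvec_self (fun m => tmul A A m j) i)
end

section
/- For a 3×3 normal tropical real matrix A, the following are equivalent: (1) Ă ≤ A entrywise; (2) A = A^⊙2. -/
/-!
Both conditions say that `A` is transitive in the tropical sense, `a_ik + a_kj ≤ a_ij` for all
`i, j, k`, i.e. `A ⊙ A ≤ A`; the reverse inequality `A ≤ A ⊙ A` holds for any matrix with zero
diagonal. For `i ≠ j` the only term of `(A ⊙ A)_ij` not equal to `a_ij` is the one with `k` the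
third index, which is `β_ij`; for `i = j` every term is `≤ 0 = a_ii` because `A` is nonpositive.
-/

theorem eq_otherIdx_of_ne {i j k : Fin 3} (hij : i ≠ j) (hki : k ≠ i) (hkj : k ≠ j) :
    k = otherIdx i j := by
  revert i j k
  decide

theorem breve_apply_of_ne (A : Fin 3 → Fin 3 → ℝ) {i j : Fin 3} (hij : i ≠ j) :
    breve A i j = A i (otherIdx i j) + A (otherIdx i j) j :=
  if_neg hij

section TropicalProduct

variable (A B : Fin 3 → Fin 3 → ℝ)

theorem le_tmul_apply (i j k : Fin 3) : A i k + B k j ≤ tmul A B i j := by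
  fin_cases k <;> simp [tmul]

theorem tmul_apply_le_iff (i j : Fin 3) (c : ℝ) :
    tmul A B i j ≤ c ↔ ∀ k, A i k + B k j ≤ c := by
  simp [tmul, Fin.forall_fin_succ]

theorem tmul_le_iff (C : Fin 3 → Fin 3 → ℝ) :
    tmul A B ≤ C ↔ ∀ i j k, A i k + B k j ≤ C i j := by
  simp only [Pi.le_def, tmul_apply_le_iff]

end TropicalProduct

section ZeroDiagonal

variable {A : Fin 3 → Fin 3 → ℝ}

theorem le_tmul_self (hd : ∀ i, A i i = 0) : A ≤ tmul A A := fun i j => by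
  simpa [hd j] using le_tmul_apply A A i j j

theorem eq_tmul_self_iff (hd : ∀ i, A i i = 0) : A = tmul A A ↔ tmul A A ≤ A :=
  ⟨fun h => h.ge, fun h => le_antisymm (le_tmul_self hd) h⟩

theorem breve_le_of_tmul_self_le (hd : ∀ i, A i i = 0) (h : tmul A A ≤ A) :
    breve A ≤ A := fun i j => by
  by_cases hij : i = j
  · simp [breve, hij, hd j]
  · rw [breve_apply_of_ne A hij]
    exact (le_tmul_apply A A i j _).trans (h i j)

end ZeroDiagonal

theorem tmul_self_le_of_breve_le {A : Fin 3 → Fin 3 → ℝ} (hA : IsNormal A) (h : breve A ≤ A) :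
    tmul A A ≤ A := by
  obtain ⟨hd, hn⟩ := hA
  refine (tmul_le_iff A A A).2 fun i j k => ?_
  by_cases hij : i = j
  · subst hij
    linarith [hd i, hn i k, hn k i]
  by_cases hki : k = i
  · simp [hki, hd i]
  by_cases hkj : k = j
  · simp [hkj, hd j]
  rw [eq_otherIdx_of_ne hij hki hkj, ← breve_apply_of_ne A hij]
  exact h i j

theorem stmt7 (A : Fin 3 → Fin 3 → ℝ) (hA : IsNormal A) :
    (∀ i j, breve A i j ≤ A i j) ↔ A = tmul A A := by
  rw [eq_tmul_self_iff hA.1]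
  exact ⟨tmul_self_le_of_breve_le hA, breve_le_of_tmul_self_le hA.1⟩
end

section
/- For a 3×3 normal tropical real matrix A, the tropical adjoint equals A^⊙2, where Â_{ji} is the tropical cofactor of a_{ij} (the tropical 2×2 determinant, i.e., max of the two products, of the complementary minor). -/
/-- The smaller of the two indices of `Fin 3` distinct from `j`. -/
def loIdx (j : Fin 3) : Fin 3 := if j = 0 then 1 else 0

/-- The larger of the two indices of `Fin 3` distinct from `j`. -/
def hiIdx (j : Fin 3) : Fin 3 := if j = 2 then 1 else 2

/-- Tropical adjoint: α_{ij} is the tropical 2×2 determinant of the minor of A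
obtained by deleting row j and column i. -/
def tadj (A : Fin 3 → Fin 3 → ℝ) : Fin 3 → Fin 3 → ℝ :=
  fun i j => max (A (loIdx j) (loIdx i) + A (hiIdx j) (hiIdx i))
               (A (loIdx j) (hiIdx i) + A (hiIdx j) (loIdx i))

theorem tadj_apply_of_ne (A : Fin 3 → Fin 3 → ℝ) {i j : Fin 3} (hij : i ≠ j) :
    tadj A i j = max (A i j + A (otherIdx i j) (otherIdx i j))
      (A i (otherIdx i j) + A (otherIdx i j) j) := by
  fin_cases i <;> fin_cases j <;> grind [tadj, otherIdx, loIdx, hiIdx]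

theorem tmul_apply_of_ne (A B : Fin 3 → Fin 3 → ℝ) {i j : Fin 3} (hij : i ≠ j) :
    tmul A B i j = max (A i i + B i j) (max (A i j + B j j)
      (A i (otherIdx i j) + B (otherIdx i j) j)) := by
  fin_cases i <;> fin_cases j <;> grind [tmul, otherIdx]

theorem add_le_tmul (A B : Fin 3 → Fin 3 → ℝ) (i k j : Fin 3) :
    A i k + B k j ≤ tmul A B i j := by
  fin_cases k <;> simp [tmul]

theorem IsNormal.tadj_apply_self {A : Fin 3 → Fin 3 → ℝ} (hA : IsNormal A) (i : Fin 3) :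
    tadj A i i = 0 := by
  rw [tadj, hA.1, hA.1, zero_add, max_eq_left]
  exact add_nonpos (hA.2 _ _) (hA.2 _ _)

theorem IsNormal.tmul_self_apply_self {A : Fin 3 → Fin 3 → ℝ} (hA : IsNormal A) (i : Fin 3) :
    tmul A A i i = 0 := by
  have hterm : ∀ k, A i k + A k i ≤ 0 := fun k => add_nonpos (hA.2 i k) (hA.2 k i)
  have hdiag : A i i + A i i = 0 := by rw [hA.1, add_zero]
  exact le_antisymm (max_le (hterm 0) (max_le (hterm 1) (hterm 2)))
    (hdiag ▸ add_le_tmul A A i i i)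

theorem stmt11 (A : Fin 3 → Fin 3 → ℝ) (hA : IsNormal A) :
    tadj A = tmul A A := by
  funext i j
  rcases eq_or_ne i j with rfl | hij
  · rw [hA.tadj_apply_self, hA.tmul_self_apply_self]
  · rw [tadj_apply_of_ne A hij, tmul_apply_of_ne A A hij]
    simp only [hA.1, zero_add, add_zero, ← max_assoc, max_self]
end
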